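/- arXiv:2001.07037 — 4 statements merged into one kernel-verified Lean document; each statement's English description precedes it below -/
import Mathlib

section
/- Let n ≥ 2 be an integer and m > n a real number. Let A be a symmetric real n×n matrix and let T = trace(A). Then ∑_{i,j=1}^n A_{ij}² − ∑_{j=1}^n A_{1j}² ≥ (1/(m−1)) · ∑_{j=1}^n A_{1j}² − T²/(m−n). -/
/-!
Put `a = A₁₁`, `S = ∑ⱼ A₁ⱼ²` and `D = ∑_{i ≠ 1} Aᵢᵢ²`. Dropping all entries of `A` except its
first row, its first column and its diagonal, symmetry gives `∑ Aᵢⱼ² - S ≥ (S - a²) + D`.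
Since `a = T - ∑_{i ≠ 1} Aᵢᵢ`, Titu's lemma with weight `1` on the `n - 1` diagonal terms and
weight `m - n` on `T` gives `a² / (m - 1) ≤ D + T² / (m - n)`; finally `S - a² ≥ (S - a²) / (m - 1)`
because `m - 1 ≥ 1`.
-/

open Finset

section
variable {ι : Type*} [Fintype ι] [DecidableEq ι]

theorem sq_apply_div_card_sub_one_add_le (d : ι → ℝ) (i₀ : ι) {q : ℝ} (hq : 0 < q) :
    d i₀ ^ 2 / (Fintype.card ι - 1 + q) ≤ ∑ i ∈ univ.erase i₀, d i ^ 2 + (∑ i, d i) ^ 2 / q := by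
  -- Titu's lemma for `d` with its `i₀`-entry replaced by `-∑ d`, weighted by `q` there and by `1`
  -- elsewhere: the entries then sum to `-d i₀` and the weights to `card ι - 1 + q`.
  set f := Function.update d i₀ (-∑ i, d i)
  set g : ι → ℝ := Function.update 1 i₀ q
  have hg : ∀ i ∈ univ, 0 < g i := fun i _ => by
    by_cases h : i = i₀
    · subst h; simpa [g] using hq
    · simp [g, h]
  have split (h : ι → ℝ) : ∑ i, h i = h i₀ + ∑ i ∈ univ.erase i₀, h i :=
    (add_sum_erase _ _ (mem_univ _)).symm
  have hf : ∑ i, f i = -d i₀ := by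
    rw [split f, sum_congr rfl fun i hi => Function.update_of_ne (ne_of_mem_erase hi) _ d,
      sum_erase_eq_sub (mem_univ _)]
    simp only [f, Function.update_self]
    ring
  have hgsum : ∑ i, g i = Fintype.card ι - 1 + q := by
    rw [split g, sum_congr rfl fun i hi => Function.update_of_ne (ne_of_mem_erase hi) _ _]
    simp [g, card_erase_of_mem, Nat.cast_pred (Fintype.card_pos_iff.mpr ⟨i₀⟩)]
    ring
  have hfg : ∑ i, f i ^ 2 / g i = (∑ i, d i) ^ 2 / q + ∑ i ∈ univ.erase i₀, d i ^ 2 := by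
    rw [split fun i => f i ^ 2 / g i]
    congr 1
    · simp [f, g]
    · refine sum_congr rfl fun i hi => ?_
      simp [f, g, ne_of_mem_erase hi]
  have titu := sq_sum_div_le_sum_sq_div univ f hg
  rw [hf, hgsum, hfg, neg_sq] at titu
  linarith

theorem Matrix.sum_row_sq_add_sum_erase_le_sum_sq (A : Matrix ι ι ℝ) (i₀ : ι) :
    ∑ j, A i₀ j ^ 2 + ∑ i ∈ univ.erase i₀, (A i i₀ ^ 2 + A i i ^ 2) ≤ ∑ i, ∑ j, A i j ^ 2 := by
  rw [← add_sum_erase univ (fun i => ∑ j, A i j ^ 2) (mem_univ i₀)]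
  refine add_le_add_right (sum_le_sum fun i hi => ?_) _
  rw [← sum_pair (f := fun j => A i j ^ 2) (ne_of_mem_erase hi).symm]
  exact sum_le_sum_of_subset_of_nonneg (subset_univ _) fun j _ _ => sq_nonneg _

theorem Matrix.IsSymm.sum_erase_col_sq {A : Matrix ι ι ℝ} (hA : A.IsSymm) (i₀ : ι) :
    ∑ i ∈ univ.erase i₀, A i i₀ ^ 2 = ∑ j, A i₀ j ^ 2 - A i₀ i₀ ^ 2 := by
  simp_rw [hA.apply i₀]
  exact sum_erase_eq_sub (mem_univ i₀)

theorem Matrix.IsSymm.row_sq_div_sub_trace_sq_div_le {A : Matrix ι ι ℝ} (hA : A.IsSymm)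
    (i₀ : ι) (hcard : 2 ≤ Fintype.card ι) {m : ℝ} (hm : Fintype.card ι < m) :
    1 / (m - 1) * ∑ j, A i₀ j ^ 2 - A.trace ^ 2 / (m - Fintype.card ι) ≤
      ∑ i, ∑ j, A i j ^ 2 - ∑ j, A i₀ j ^ 2 := by
  rw [Matrix.trace]
  have hrows := A.sum_row_sq_add_sum_erase_le_sum_sq i₀
  rw [sum_add_distrib, hA.sum_erase_col_sq] at hrows
  have hdiag := sq_apply_div_card_sub_one_add_le (fun i => A i i) i₀ (sub_pos.2 hm)
  rw [sub_add_sub_cancel'] at hdiag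
  have hcorner : A i₀ i₀ ^ 2 ≤ ∑ j, A i₀ j ^ 2 :=
    single_le_sum (f := fun j => A i₀ j ^ 2) (fun j _ => sq_nonneg _) (mem_univ i₀)
  have hm1 : 1 ≤ m - 1 := by
    have : (2 : ℝ) ≤ Fintype.card ι := by exact_mod_cast hcard
    linarith
  have hoff := div_le_self (sub_nonneg.2 hcorner) hm1
  calc 1 / (m - 1) * ∑ j, A i₀ j ^ 2 - (∑ i, A i i) ^ 2 / (m - Fintype.card ι)
      = (∑ j, A i₀ j ^ 2 - A i₀ i₀ ^ 2) / (m - 1) + A i₀ i₀ ^ 2 / (m - 1)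
          - (∑ i, A i i) ^ 2 / (m - Fintype.card ι) := by ring
    _ ≤ ∑ i, ∑ j, A i j ^ 2 - ∑ j, A i₀ j ^ 2 := by linarith

end

/-- Pointwise algebraic core of the Bochner-type inequality (Lemma 2.1):
for a symmetric `n × n` real matrix `A` (`n ≥ 2`) with trace `T` and any real `m > n`,
`∑_{i,j} A_{ij}² − ∑_j A_{1j}² ≥ (1/(m−1))·∑_j A_{1j}² − T²/(m−n)`. -/
theorem bochner_algebraic_core (n : ℕ) (hn : 2 ≤ n) (m : ℝ) (hm : (n : ℝ) < m)
    (A : Matrix (Fin n) (Fin n) ℝ) (hA : A.IsSymm) :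
    (∑ i : Fin n, ∑ j : Fin n, (A i j) ^ 2) - ∑ j : Fin n, (A ⟨0, by omega⟩ j) ^ 2 ≥
      (1 / (m - 1)) * ∑ j : Fin n, (A ⟨0, by omega⟩ j) ^ 2 - (Matrix.trace A) ^ 2 / (m - n) := by
  simpa using
    hA.row_sq_div_sub_trace_sq_div_le ⟨0, by omega⟩ (by simpa using hn) (m := m) (by simpa using hm)
end

section
/- Let n ≥ 3 be an integer and m > n a real number. Let A be a symmetric real n×n matrix with trace T. Then equality holds in the inequality ∑_{i,j=1}^n A_{ij}² − ∑_{j=1}^n A_{1j}² ≥ (1/(m−1)) ∑_{j=1}^n A_{1j}² − T²/(m−n) if and only if A is the diagonal matrix with A_{11} = −(m−1)μ and A_{ii} = μ for all 2 ≤ i ≤ n, where μ = T/(n−m). -/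
set_option maxHeartbeats 2000000


open Finset

/-- Equality case of the pointwise algebraic core of the Bochner-type inequality
(Lemma 2.1): for a symmetric `n × n` real matrix `A` (`n ≥ 3`) with trace `T` and real
`m > n`, equality holds in
`∑_{i,j} A_{ij}² − ∑_j A_{1j}² ≥ (1/(m−1))·∑_j A_{1j}² − T²/(m−n)`
iff `A` is diagonal with `A₁₁ = −(m−1)μ` and `A_{ii} = μ` for `i ≥ 2`, where `μ = T/(n−m)`. -/
theorem bochner_algebraic_core_equality (n : ℕ) (hn : 3 ≤ n) (m : ℝ) (hm : (n : ℝ) < m)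
    (A : Matrix (Fin n) (Fin n) ℝ) (hA : A.IsSymm) :
    ((∑ i : Fin n, ∑ j : Fin n, (A i j) ^ 2) - ∑ j : Fin n, (A ⟨0, by omega⟩ j) ^ 2 =
        (1 / (m - 1)) * ∑ j : Fin n, (A ⟨0, by omega⟩ j) ^ 2 -
          (Matrix.trace A) ^ 2 / (m - n)) ↔
      A = Matrix.diagonal (fun i : Fin n =>
        if i = ⟨0, by omega⟩ then -(m - 1) * (Matrix.trace A / ((n : ℝ) - m))
        else Matrix.trace A / ((n : ℝ) - m)) := by
  have hn' : (3:ℝ) ≤ (n:ℝ) := by exact_mod_cast hn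
  set e0 : Fin n := ⟨0, by omega⟩ with he0
  set T := Matrix.trace A with hT
  set μ := T / ((n : ℝ) - m) with hμ
  have hnm : (n:ℝ) - m ≠ 0 := by intro h; linarith
  have hmn : m - (n:ℝ) ≠ 0 := by intro h; linarith
  have hm1 : (0:ℝ) < m - 1 := by linarith
  have hm2 : (0:ℝ) < m - 2 := by linarith
  have hsym : ∀ i j, A i j = A j i := fun i j => hA.apply j i
  set U : Finset (Fin n) := Finset.univ.erase e0 with hUdef
  have hcard : (U.card : ℝ) = (n:ℝ) - 1 := by
    rw [hUdef, Finset.card_erase_of_mem (Finset.mem_univ _), Finset.card_univ,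
      Fintype.card_fin, Nat.cast_sub (by omega), Nat.cast_one]
  set c2 := ∑ j ∈ U, (A e0 j)^2 with hc2def
  set Off := ∑ i ∈ U, ∑ j ∈ U.erase i, (A i j)^2 with hOffdef
  set b := A e0 e0 with hbdef
  set s' := ∑ i ∈ U, A i i with hs'def
  set Dg := ∑ i ∈ U, (A i i)^2 with hDgdef
  have hrow0 : ∑ j : Fin n, (A e0 j)^2 = b^2 + c2 :=
    (Finset.add_sum_erase _ _ (Finset.mem_univ e0)).symm
  have hS : ∑ i : Fin n, ∑ j : Fin n, (A i j)^2 = (b^2 + c2) + (c2 + (Dg + Off)) := by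
    rw [← Finset.add_sum_erase _ (fun i => ∑ j, (A i j)^2) (Finset.mem_univ e0), hrow0]
    congr 1
    have h1 : ∀ i ∈ U, (∑ j : Fin n, (A i j)^2)
        = (A e0 i)^2 + ((A i i)^2 + ∑ j ∈ U.erase i, (A i j)^2) := by
      intro i hi
      rw [← Finset.add_sum_erase _ (fun j => (A i j)^2) (Finset.mem_univ e0), hsym i e0,
        ← Finset.add_sum_erase _ (fun j => (A i j)^2) hi]
    rw [Finset.sum_congr rfl h1, Finset.sum_add_distrib, Finset.sum_add_distrib]
  have htr : T = b + s' := by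
    have h0 : T = ∑ i : Fin n, A i i := by rw [hT]; rfl
    rw [h0]
    exact (Finset.add_sum_erase _ (fun i => A i i) (Finset.mem_univ e0)).symm
  set sd := ∑ i ∈ U, (A i i - μ) with hsddef
  set SD := ∑ i ∈ U, (A i i - μ)^2 with hSDdef
  have hsd : sd = s' - ((n:ℝ)-1) * μ := by
    rw [hsddef, Finset.sum_sub_distrib, Finset.sum_const, nsmul_eq_mul, hcard]
  have hSD : SD = Dg - 2*μ*s' + ((n:ℝ)-1)*μ^2 := by
    rw [hSDdef]
    simp only [sub_sq]
    rw [Finset.sum_add_distrib, Finset.sum_sub_distrib, Finset.sum_const, nsmul_eq_mul, hcard]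
    have h2 : ∑ i ∈ U, 2 * A i i * μ = 2 * μ * s' := by
      rw [hs'def, Finset.mul_sum]
      exact Finset.sum_congr rfl fun i _ => by ring
    rw [h2]
  have hb : b = T - s' := by linarith
  have hμT : T = ((n:ℝ) - m) * μ := by rw [hμ]; field_simp
  have key : (c2 + (Dg + Off)) - ((1/(m-1)) * (b^2 + c2) - T^2/(m-n))
      = (m-2)/(m-1) * c2 + Off + (SD - sd^2/(m-1)) := by
    rw [hSD, hsd, hb, hμT]
    field_simp
    ring
  have hc2nn : 0 ≤ c2 := Finset.sum_nonneg fun j _ => sq_nonneg _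
  have hOffnn : 0 ≤ Off := Finset.sum_nonneg fun i _ => Finset.sum_nonneg fun j _ => sq_nonneg _
  have hSDnn : 0 ≤ SD := Finset.sum_nonneg fun i _ => sq_nonneg _
  have hCS : sd^2 ≤ ((n:ℝ)-1) * SD := by
    have h := sq_sum_le_card_mul_sum_sq (s := U) (f := fun i => A i i - μ)
    rwa [hcard] at h
  have hQnn : 0 ≤ SD - sd^2/(m-1) := by
    rw [sub_nonneg, div_le_iff₀ hm1]
    nlinarith [mul_nonneg hSDnn (show (0:ℝ) ≤ m - n by linarith)]
  have ht1nn : 0 ≤ (m-2)/(m-1) * c2 := mul_nonneg (by positivity) hc2nn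
  rw [hS, hrow0]
  have hmain : ((m-2)/(m-1) * c2 + Off + (SD - sd^2/(m-1)) = 0) ↔
      A = Matrix.diagonal (fun i : Fin n => if i = e0 then -(m - 1) * μ else μ) := by
    constructor
    · intro h
      have hOffz : Off = 0 := by linarith
      have hQz : SD - sd^2/(m-1) = 0 := by linarith
      have ht1z : (m-2)/(m-1) * c2 = 0 := by linarith
      have hc2z : c2 = 0 := by
        rcases mul_eq_zero.mp ht1z with h' | h'
        · exact absurd h' (by positivity)
        · exact h'
      -- derive SD = 0
      have h1' : sd^2 = SD * (m-1) := by
        have h1 : sd^2/(m-1) = SD := by linarith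
        exact (div_eq_iff hm1.ne').mp h1
      have hineq : SD * (m-1) ≤ ((n:ℝ)-1) * SD := h1' ▸ hCS
      have hSDz : SD = 0 := by
        by_contra hne
        have hpos : 0 < SD := lt_of_le_of_ne hSDnn (Ne.symm hne)
        have hid : SD * (m-1) - ((n:ℝ)-1)*SD = SD * (m - n) := by ring
        have h2 : 0 < SD * (m - n) := mul_pos hpos (by linarith)
        linarith
      have hsdz : sd = 0 := by
        have : sd^2 = 0 := by rw [h1', hSDz]; ring
        exact (pow_eq_zero_iff two_ne_zero).mp this
      -- entrywise facts
      have hdiagU : ∀ i ∈ U, A i i = μ := by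
        intro i hi
        have hz := (Finset.sum_eq_zero_iff_of_nonneg (fun j _ => sq_nonneg _)).mp hSDz i hi
        have := (pow_eq_zero_iff two_ne_zero).mp hz
        linarith
      have hrowz : ∀ j ∈ U, A e0 j = 0 := by
        intro j hj
        have hz := (Finset.sum_eq_zero_iff_of_nonneg (fun j _ => sq_nonneg _)).mp hc2z j hj
        exact (pow_eq_zero_iff two_ne_zero).mp hz
      have hOffz' : ∀ i ∈ U, ∀ j ∈ U.erase i, A i j = 0 := by
        intro i hi j hj
        have hz1 := (Finset.sum_eq_zero_iff_of_nonneg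
          (fun i _ => Finset.sum_nonneg fun j _ => sq_nonneg _)).mp hOffz i hi
        have hz := (Finset.sum_eq_zero_iff_of_nonneg (fun j _ => sq_nonneg _)).mp hz1 j hj
        exact (pow_eq_zero_iff two_ne_zero).mp hz
      have hs'val : s' = ((n:ℝ)-1) * μ := by linarith
      have hbval : b = -(m-1) * μ := by
        rw [hb, hμT, hs'val]; ring
      ext i j
      rcases eq_or_ne i j with rfl | hij
      · rw [Matrix.diagonal_apply_eq]
        rcases eq_or_ne i e0 with rfl | hi
        · rw [if_pos rfl]; exact hbval
        · rw [if_neg hi]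
          exact hdiagU i (Finset.mem_erase.mpr ⟨hi, Finset.mem_univ _⟩)
      · rw [Matrix.diagonal_apply_ne _ hij]
        rcases eq_or_ne i e0 with rfl | hi
        · exact hrowz j (Finset.mem_erase.mpr ⟨Ne.symm hij, Finset.mem_univ _⟩)
        · rcases eq_or_ne j e0 with rfl | hj
          · rw [hsym]
            exact hrowz i (Finset.mem_erase.mpr ⟨hi, Finset.mem_univ _⟩)
          · exact hOffz' i (Finset.mem_erase.mpr ⟨hi, Finset.mem_univ _⟩) j
              (Finset.mem_erase.mpr ⟨Ne.symm hij, Finset.mem_erase.mpr ⟨hj, Finset.mem_univ _⟩⟩)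
    · intro hEq
      have hzero : ∀ i j : Fin n, i ≠ j → A i j = 0 := by
        intro i j hij
        rw [hEq]; exact Matrix.diagonal_apply_ne _ hij
      have hdiagU : ∀ i ∈ U, A i i = μ := by
        intro i hi
        rw [hEq, Matrix.diagonal_apply_eq, if_neg (Finset.mem_erase.mp hi).1]
      have hc2z : c2 = 0 := by
        rw [hc2def]
        refine Finset.sum_eq_zero fun j hj => ?_
        rw [hzero e0 j (fun h => (Finset.mem_erase.mp hj).1 h.symm)]; ring
      have hOffz : Off = 0 := by
        rw [hOffdef]
        refine Finset.sum_eq_zero fun i hi => Finset.sum_eq_zero fun j hj => ?_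
        rw [hzero i j (fun h => (Finset.mem_erase.mp hj).1 h.symm)]; ring
      have hSDz : SD = 0 := by
        rw [hSDdef]
        refine Finset.sum_eq_zero fun i hi => ?_
        rw [hdiagU i hi]; ring
      have hsdz : sd = 0 := by
        rw [hsddef]
        refine Finset.sum_eq_zero fun i hi => ?_
        rw [hdiagU i hi]; ring
      rw [hc2z, hOffz, hSDz, hsdz]
      norm_num
  clear_value sd SD Dg s' b Off c2 U μ T e0
  constructor
  · intro h; exact hmain.mp (by linarith)
  · intro h; have := hmain.mpr h; linarith
end

section
/- Let n ≥ 1 and let u, f : E → ℝ be smooth functions on E = EuclideanSpace ℝ (Fin n). Then at every point, (1/2)·Δ_f(|∇u|²) = |Hess u|² + ⟨∇(Δ_f u), ∇u⟩ + Hess f(∇u, ∇u), where |Hess u|² denotes the squared Frobenius norm of the Hessian of u. -/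
open MeasureTheory Real Filter
open scoped RealInnerProductSpace ENNReal Topology

noncomputable section

/-- The Hessian of `u` at `x`, applied to the pair of vectors `(v, w)`. -/
def hess {n : ℕ} (u : EuclideanSpace ℝ (Fin n) → ℝ) (x v w : EuclideanSpace ℝ (Fin n)) : ℝ :=
  fderiv ℝ (fun y => fderiv ℝ u y w) x v

/-- The Euclidean Laplacian `Δu = trace (Hess u)`. -/
def lap {n : ℕ} (u : EuclideanSpace ℝ (Fin n) → ℝ) (x : EuclideanSpace ℝ (Fin n)) : ℝ :=
  ∑ i, hess u x (EuclideanSpace.single i 1) (EuclideanSpace.single i 1)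

/-- The weighted (`f`-)Laplacian `Δ_f u = Δu − ⟨∇f, ∇u⟩`. -/
def fLap {n : ℕ} (f u : EuclideanSpace ℝ (Fin n) → ℝ) (x : EuclideanSpace ℝ (Fin n)) : ℝ :=
  lap u x - ⟪gradient f x, gradient u x⟫

/-- The weighted measure `e^{−f}·dv` on `ℝⁿ`. -/
def wMeasure (n : ℕ) (f : EuclideanSpace ℝ (Fin n) → ℝ) :
    Measure (EuclideanSpace ℝ (Fin n)) :=
  volume.withDensity fun x => ENNReal.ofReal (Real.exp (-f x))

def pd {n : ℕ} (i : Fin n) (g : EuclideanSpace ℝ (Fin n) → ℝ)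
    (y : EuclideanSpace ℝ (Fin n)) : ℝ :=
  fderiv ℝ g y (EuclideanSpace.single i 1)

variable {n : ℕ} {g h u f : EuclideanSpace ℝ (Fin n) → ℝ} {x : EuclideanSpace ℝ (Fin n)}

lemma pd_contDiff (i : Fin n) (hg : ContDiff ℝ (⊤ : ℕ∞) g) : ContDiff ℝ (⊤ : ℕ∞) (pd i g) :=
  (hg.fderiv_right (by simp)).clm_apply contDiff_const

lemma pd_diff (i : Fin n) (hg : ContDiff ℝ (⊤ : ℕ∞) g) (y : EuclideanSpace ℝ (Fin n)) :
    DifferentiableAt ℝ (pd i g) y :=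
  ((pd_contDiff i hg).differentiable (by simp)).differentiableAt

lemma pd_comm (i j : Fin n) (hg : ContDiff ℝ (⊤ : ℕ∞) g) (x : EuclideanSpace ℝ (Fin n)) :
    pd i (pd j g) x = pd j (pd i g) x := by
  have h2 : IsSymmSndFDerivAt ℝ g x := hg.contDiffAt.isSymmSndFDerivAt (by
    exact (by rw [minSmoothness_of_isRCLikeNormedField]; exact WithTop.coe_le_coe.mpr le_top))
  have key : ∀ v w, fderiv ℝ (fun y => fderiv ℝ g y w) x v
      = fderiv ℝ (fderiv ℝ g) x v w := by
    intro v w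
    have hd : DifferentiableAt ℝ (fderiv ℝ g) x :=
      ((hg.fderiv_right (m := (⊤ : ℕ∞)) (by simp)).differentiable (by simp)).differentiableAt
    rw [fderiv_clm_apply hd (differentiableAt_const w)]
    simp
  show fderiv ℝ (fun y => fderiv ℝ g y (EuclideanSpace.single j 1)) x (EuclideanSpace.single i 1) = _
  rw [key, h2, ← key]
  rfl

lemma grad_coord (x : EuclideanSpace ℝ (Fin n)) (i : Fin n) :
    gradient g x i = pd i g x := by
  have : ⟪gradient g x, EuclideanSpace.single i (1:ℝ)⟫ = fderiv ℝ g x (EuclideanSpace.single i 1) := by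
    rw [gradient, InnerProductSpace.toDual_symm_apply]
  rw [EuclideanSpace.inner_single_right] at this
  simpa [pd] using this

lemma grad_inner (x : EuclideanSpace ℝ (Fin n)) :
    ⟪gradient g x, gradient h x⟫ = ∑ i, pd i g x * pd i h x := by
  rw [PiLp.inner_apply]
  refine Finset.sum_congr rfl fun i _ => ?_
  rw [grad_coord, grad_coord]
  simp [RCLike.inner_apply]
  ring

lemma grad_norm_sq (x : EuclideanSpace ℝ (Fin n)) :
    ‖gradient g x‖ ^ 2 = ∑ i, pd i g x ^ 2 := by
  rw [← real_inner_self_eq_norm_sq, grad_inner]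
  refine Finset.sum_congr rfl fun i _ => (sq _).symm

lemma pd_congr (i : Fin n) (hgh : ∀ y, g y = h y) : pd i g x = pd i h x := by
  have : g = h := funext hgh
  rw [this]

lemma pd_sum {ι : Type*} (s : Finset ι) (F : ι → EuclideanSpace ℝ (Fin n) → ℝ)
    (hF : ∀ k ∈ s, DifferentiableAt ℝ (F k) x) (i : Fin n) :
    pd i (fun y => ∑ k ∈ s, F k y) x = ∑ k ∈ s, pd i (F k) x := by
  unfold pd
  rw [fderiv_fun_sum hF]
  simp

lemma pd_mul (i : Fin n) (hg : DifferentiableAt ℝ g x) (hh : DifferentiableAt ℝ h x) :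
    pd i (fun y => g y * h y) x = pd i g x * h x + g x * pd i h x := by
  unfold pd
  rw [fderiv_fun_mul hg hh]
  simp
  ring

lemma pd_sub (i : Fin n) (hg : DifferentiableAt ℝ g x) (hh : DifferentiableAt ℝ h x) :
    pd i (fun y => g y - h y) x = pd i g x - pd i h x := by
  unfold pd
  rw [fderiv_fun_sub hg hh]
  simp

lemma euclid_decomp (v : EuclideanSpace ℝ (Fin n)) :
    v = ∑ i, v i • EuclideanSpace.single i (1:ℝ) := by
  have := (EuclideanSpace.basisFun (Fin n) ℝ).sum_repr v
  simpa [EuclideanSpace.basisFun_apply, EuclideanSpace.basisFun_repr] using this.symm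

lemma hess_eq (hg : ContDiff ℝ (⊤ : ℕ∞) g) (x v w : EuclideanSpace ℝ (Fin n)) :
    hess g x v w = fderiv ℝ (fderiv ℝ g) x v w := by
  have hd : DifferentiableAt ℝ (fderiv ℝ g) x :=
    ((hg.fderiv_right (m := (⊤ : ℕ∞)) (by simp)).differentiable (by simp)).differentiableAt
  unfold hess
  rw [fderiv_clm_apply hd (differentiableAt_const w)]
  simp

lemma hess_bilinear (hg : ContDiff ℝ (⊤ : ℕ∞) g) (x v w : EuclideanSpace ℝ (Fin n)) :
    hess g x v w = ∑ i, ∑ j, v i * w j * pd i (pd j g) x := by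
  have hpd : ∀ i j, pd i (pd j g) x = fderiv ℝ (fderiv ℝ g) x
      (EuclideanSpace.single i 1) (EuclideanSpace.single j 1) := by
    intro i j
    exact hess_eq hg x _ _
  rw [hess_eq hg]
  set B := fderiv ℝ (fderiv ℝ g) x with hB
  conv_lhs => rw [euclid_decomp v]
  rw [map_sum, ContinuousLinearMap.sum_apply]
  refine Finset.sum_congr rfl fun i _ => ?_
  rw [B.map_smul, ContinuousLinearMap.smul_apply, smul_eq_mul]
  conv_lhs => rw [euclid_decomp w]
  rw [map_sum, Finset.mul_sum]
  refine Finset.sum_congr rfl fun j _ => ?_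
  rw [(B _).map_smul, smul_eq_mul, hpd i j]
  ring

lemma pd_const_mul (i : Fin n) (c : ℝ) (hg : DifferentiableAt ℝ g x) :
    pd i (fun y => c * g y) x = c * pd i g x := by
  unfold pd
  rw [fderiv_const_mul hg]
  simp

lemma pd_sq (i : Fin n) (hg : DifferentiableAt ℝ g x) :
    pd i (fun y => g y ^ 2) x = 2 * (g x * pd i g x) := by
  have : (fun y => g y ^ 2) = fun y => g y * g y := by
    funext y; ring
  rw [this, pd_mul i hg hg]
  ring

lemma lap_eq (g : EuclideanSpace ℝ (Fin n) → ℝ) (x : EuclideanSpace ℝ (Fin n)) :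
    lap g x = ∑ i, pd i (pd i g) x := rfl

lemma hess_single (g : EuclideanSpace ℝ (Fin n) → ℝ) (x : EuclideanSpace ℝ (Fin n)) (i j : Fin n) :
    hess g x (EuclideanSpace.single i 1) (EuclideanSpace.single j 1) = pd i (pd j g) x := rfl

/-- Weighted Bochner formula on `(ℝⁿ, g_euc, e^{−f}dv)`: for smooth `u, f`, at every point,
`(1/2)·Δ_f(|∇u|²) = |Hess u|² + ⟨∇(Δ_f u), ∇u⟩ + Hess f(∇u, ∇u)`. -/
theorem weighted_bochner_formula (n : ℕ) (hn : 1 ≤ n)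
    (u f : EuclideanSpace ℝ (Fin n) → ℝ)
    (hu : ContDiff ℝ (⊤ : ℕ∞) u) (hf : ContDiff ℝ (⊤ : ℕ∞) f) (x : EuclideanSpace ℝ (Fin n)) :
    (1 / 2) * fLap f (fun y => ‖gradient u y‖ ^ 2) x =
      (∑ i, ∑ j, (hess u x (EuclideanSpace.single i 1) (EuclideanSpace.single j 1)) ^ 2) +
        ⟪gradient (fLap f u) x, gradient u x⟫ +
        hess f x (gradient u x) (gradient u x) := by
  classical
  -- smoothness of iterated partials
  have h1 : ∀ k, ContDiff ℝ (⊤ : ℕ∞) (pd k u) := fun k => pd_contDiff k hu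
  have h2 : ∀ j k, ContDiff ℝ (⊤ : ℕ∞) (pd j (pd k u)) := fun j k => pd_contDiff j (h1 k)
  have hf1 : ∀ k, ContDiff ℝ (⊤ : ℕ∞) (pd k f) := fun k => pd_contDiff k hf
  have d1 : ∀ k y, DifferentiableAt ℝ (pd k u) y := fun k => pd_diff k hu
  have d2 : ∀ j k y, DifferentiableAt ℝ (pd j (pd k u)) y := fun j k => pd_diff j (h1 k)
  have df1 : ∀ k y, DifferentiableAt ℝ (pd k f) y := fun k => pd_diff k hf
  -- replace |∇u|² by sum of squares
  have hSfun : (fun y => ‖gradient u y‖ ^ 2) =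
      fun y => ∑ k, pd k u y ^ 2 := funext fun y => grad_norm_sq y
  rw [hSfun]
  set S : EuclideanSpace ℝ (Fin n) → ℝ := fun y => ∑ k, pd k u y ^ 2 with hSdef
  have pdS : ∀ (i : Fin n) (y : EuclideanSpace ℝ (Fin n)),
      pd i S y = ∑ k, 2 * (pd k u y * pd i (pd k u) y) := by
    intro i y
    rw [hSdef, pd_sum Finset.univ (fun k y => pd k u y ^ 2)
      (fun k _ => ((d1 k y).pow 2)) i]
    exact Finset.sum_congr rfl fun k _ => by rw [pd_sq i (d1 k y)]
  have dprod : ∀ (i k : Fin n) (y : EuclideanSpace ℝ (Fin n)),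
      DifferentiableAt ℝ (fun z => 2 * (pd k u z * pd i (pd k u) z)) y := by
    intro i k y
    exact ((d1 k y).mul (d2 i k y)).const_mul 2
  have pdpdS : ∀ i : Fin n, pd i (pd i S) x =
      ∑ j, (2 * (pd i (pd j u) x * pd i (pd j u) x) +
        2 * (pd j u x * pd i (pd i (pd j u)) x)) := by
    intro i
    rw [pd_congr i (pdS i),
      pd_sum Finset.univ (fun k y => 2 * (pd k u y * pd i (pd k u) y))
        (fun k _ => dprod i k x) i]
    refine Finset.sum_congr rfl fun k _ => ?_
    rw [pd_const_mul (g := fun y => pd k u y * pd i (pd k u) y) i 2 ((d1 k x).mul (d2 i k x)), pd_mul i (d1 k x) (d2 i k x)]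
    ring
  -- LHS
  have hLHS : (1 / 2) * fLap f S x =
      ∑ i, ∑ j, (pd i (pd j u) x ^ 2 + pd j u x * pd i (pd i (pd j u)) x
        - pd i f x * (pd j u x * pd i (pd j u) x)) := by
    show (1 / 2) * (lap S x - ⟪gradient f x, gradient S x⟫) = _
    rw [lap_eq, grad_inner, ← Finset.sum_sub_distrib, Finset.mul_sum]
    refine Finset.sum_congr rfl fun i _ => ?_
    rw [pdpdS i, pdS i x, Finset.mul_sum, ← Finset.sum_sub_distrib, Finset.mul_sum]
    refine Finset.sum_congr rfl fun j _ => ?_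
    ring
  -- RHS pieces
  have hflapu : fLap f u = fun y => (∑ j, pd j (pd j u) y) - ∑ j, pd j f y * pd j u y := by
    funext y
    show lap u y - ⟪gradient f y, gradient u y⟫ = _
    rw [lap_eq, grad_inner]
  have pdflap : ∀ i : Fin n, pd i (fLap f u) x =
      ∑ j, (pd i (pd j (pd j u)) x - (pd i (pd j f) x * pd j u x + pd j f x * pd i (pd j u) x)) := by
    intro i
    rw [hflapu,
      pd_sub i (DifferentiableAt.fun_sum (fun j _ => d2 j j x))
        (DifferentiableAt.fun_sum (fun j _ => (df1 j x).fun_mul (d1 j x))),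
      pd_sum Finset.univ _ (fun j _ => d2 j j x) i,
      pd_sum Finset.univ _ (fun j _ => (df1 j x).fun_mul (d1 j x)) i,
      ← Finset.sum_sub_distrib]
    exact Finset.sum_congr rfl fun j _ => by rw [pd_mul i (df1 j x) (d1 j x)]
  have hterm2 : ⟪gradient (fLap f u) x, gradient u x⟫ =
      ∑ i, ∑ j, ((pd i (pd j (pd j u)) x
        - (pd i (pd j f) x * pd j u x + pd j f x * pd i (pd j u) x)) * pd i u x) := by
    rw [grad_inner]
    exact Finset.sum_congr rfl fun i _ => by rw [pdflap i, Finset.sum_mul]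
  have hterm3 : hess f x (gradient u x) (gradient u x) =
      ∑ i, ∑ j, pd i u x * pd j u x * pd i (pd j f) x := by
    rw [hess_bilinear hf]
    exact Finset.sum_congr rfl fun i _ => Finset.sum_congr rfl fun j _ => by
      rw [grad_coord, grad_coord]
  rw [hLHS, hterm2, hterm3]
  simp only [hess_single]
  rw [← Finset.sum_add_distrib, ← Finset.sum_add_distrib, Finset.sum_comm]
  refine Finset.sum_congr rfl fun j _ => ?_
  rw [← Finset.sum_add_distrib, ← Finset.sum_add_distrib]
  refine Finset.sum_congr rfl fun i _ => ?_
  -- symmetries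
  have hsym : pd i (pd j u) x = pd j (pd i u) x := pd_comm i j hu x
  have tsym : pd i (pd i (pd j u)) x = pd j (pd i (pd i u)) x := by
    have e1 : pd i (pd j u) = pd j (pd i u) := funext fun y => pd_comm i j hu y
    rw [e1, pd_comm i j (h1 i)]
  rw [hsym, tsym]
  ring

end
end

section
/- Let n ≥ 1, let f : E → ℝ be smooth on E = EuclideanSpace ℝ (Fin n), and let μ be the measure e^{−f}·(Lebesgue measure). Let h : E → ℝ be smooth with ∫_E h² dμ < ∞ and ∫_E |∇h|² dμ < ∞. Let C > 0 and suppose for each R > 0 that φ_R : E → ℝ is smooth with 0 ≤ φ_R ≤ 1, φ_R = 1 on the ball B(0,R), φ_R = 0 outside B(0,2R), and |∇φ_R|² ≤ C/R² everywhere. Then lim_{R→∞} ∫_E φ_R h ⟨∇φ_R, ∇h⟩ dμ = 0 and lim_{R→∞} ∫_E |∇(φ_R h)|² dμ = ∫_E |∇h|² dμ. -/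
set_option maxHeartbeats 1000000


open MeasureTheory Real Filter
open scoped RealInnerProductSpace ENNReal Topology

noncomputable section

lemma continuous_gradient' {n : ℕ} {u : EuclideanSpace ℝ (Fin n) → ℝ} (hu : ContDiff ℝ (⊤ : ℕ∞) u) :
    Continuous (gradient u) := by
  have h1 : Continuous fun x => fderiv ℝ u x := hu.continuous_fderiv (by simp)
  exact (InnerProductSpace.toDual ℝ _).symm.continuous.comp h1

lemma gradient_mul' {n : ℕ} {u v : EuclideanSpace ℝ (Fin n) → ℝ} {x : EuclideanSpace ℝ (Fin n)}
    (hu : DifferentiableAt ℝ u x) (hv : DifferentiableAt ℝ v x) :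
    gradient (fun y => u y * v y) x = u x • gradient v x + v x • gradient u x := by
  unfold gradient
  rw [fderiv_fun_mul hu hv, map_add, _root_.map_smul, _root_.map_smul]

/-- Convergence statements (2.5) and (2.6) of Lemma 2.3 on `(ℝⁿ, g_euc, e^{−f}dv)`:
for smooth `h` with `h ∈ L²_f` and `|∇h| ∈ L²_f`, and cutoff functions `φ_R`
(equal to `1` on `B(0,R)`, vanishing off `B(0,2R)`, with `|∇φ_R|² ≤ C/R²`),
one has `∫ φ_R h ⟨∇φ_R, ∇h⟩ dμ → 0` and `∫ |∇(φ_R h)|² dμ → ∫ |∇h|² dμ` as `R → ∞`. -/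
theorem cutoff_convergence (n : ℕ) (hn : 1 ≤ n)
    (f h : EuclideanSpace ℝ (Fin n) → ℝ)
    (hf : ContDiff ℝ (⊤ : ℕ∞) f) (hh : ContDiff ℝ (⊤ : ℕ∞) h)
    (hL2 : Integrable (fun x => (h x) ^ 2) (wMeasure n f))
    (hD : Integrable (fun x => ‖gradient h x‖ ^ 2) (wMeasure n f))
    (C : ℝ) (hC : 0 < C)
    (φ : ℝ → EuclideanSpace ℝ (Fin n) → ℝ)
    (hφ : ∀ R : ℝ, 0 < R →
      ContDiff ℝ (⊤ : ℕ∞) (φ R) ∧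
      (∀ x, 0 ≤ φ R x ∧ φ R x ≤ 1) ∧
      (∀ x ∈ Metric.ball (0 : EuclideanSpace ℝ (Fin n)) R, φ R x = 1) ∧
      (∀ x ∉ Metric.ball (0 : EuclideanSpace ℝ (Fin n)) (2 * R), φ R x = 0) ∧
      (∀ x, ‖gradient (φ R) x‖ ^ 2 ≤ C / R ^ 2)) :
    Tendsto
        (fun R : ℝ => ∫ x, φ R x * h x * ⟪gradient (φ R) x, gradient h x⟫ ∂(wMeasure n f))
        atTop (nhds 0) ∧
      Tendsto
        (fun R : ℝ => ∫ x, ‖gradient (fun y => φ R y * h y) x‖ ^ 2 ∂(wMeasure n f))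
        atTop (nhds (∫ x, ‖gradient h x‖ ^ 2 ∂(wMeasure n f))) := by
  set μ := wMeasure n f with hμdef
  have hhc : Continuous h := hh.continuous
  have hgc : Continuous (gradient h) := continuous_gradient' hh
  have hgInt : Integrable (fun x => h x ^ 2 + ‖gradient h x‖ ^ 2) μ := hL2.add hD
  set K : ℝ := ∫ x, (h x ^ 2 + ‖gradient h x‖ ^ 2) ∂μ with hKdef
  set L : ℝ := ∫ x, h x ^ 2 ∂μ with hLdef
  have hK0 : 0 ≤ K := integral_nonneg fun x => by positivity
  have hL0 : 0 ≤ L := integral_nonneg fun x => by positivity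
  -- pointwise bound for the A-term integrand
  have key : ∀ R : ℝ, 0 < R → ∀ x,
      ‖φ R x * h x * ⟪gradient (φ R) x, gradient h x⟫‖
        ≤ Real.sqrt C / R * ((h x ^ 2 + ‖gradient h x‖ ^ 2) / 2) := by
    intro R hR x
    obtain ⟨hsm, hbd, h1, h0, hgr⟩ := hφ R hR
    have hin := abs_real_inner_le_norm (gradient (φ R) x) (gradient h x)
    have h4 : ‖gradient (φ R) x‖ ≤ Real.sqrt C / R := by
      have := Real.sqrt_le_sqrt (hgr x)
      rwa [Real.sqrt_sq (norm_nonneg _), Real.sqrt_div hC.le, Real.sqrt_sq hR.le] at this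
    have h5 : (0:ℝ) ≤ Real.sqrt C / R := by positivity
    have h6 : |h x| * ‖gradient h x‖ ≤ (h x ^ 2 + ‖gradient h x‖ ^ 2) / 2 := by
      nlinarith [sq_nonneg (|h x| - ‖gradient h x‖), sq_abs (h x)]
    rw [Real.norm_eq_abs, abs_mul, abs_mul, abs_of_nonneg (hbd x).1]
    calc φ R x * |h x| * |⟪gradient (φ R) x, gradient h x⟫|
        ≤ 1 * |h x| * (‖gradient (φ R) x‖ * ‖gradient h x‖) :=
          mul_le_mul (mul_le_mul (hbd x).2 le_rfl (abs_nonneg _) zero_le_one) hin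
            (abs_nonneg _) (by positivity)
      _ = |h x| * ‖gradient (φ R) x‖ * ‖gradient h x‖ := by ring
      _ ≤ |h x| * (Real.sqrt C / R) * ‖gradient h x‖ := by gcongr
      _ = Real.sqrt C / R * (|h x| * ‖gradient h x‖) := by ring
      _ ≤ Real.sqrt C / R * ((h x ^ 2 + ‖gradient h x‖ ^ 2) / 2) :=
          mul_le_mul_of_nonneg_left h6 h5
  -- pointwise bound for the B-term integrand
  have keyB : ∀ R : ℝ, 0 < R → ∀ x,
      ‖h x ^ 2 * ‖gradient (φ R) x‖ ^ 2‖ ≤ C / R ^ 2 * (h x ^ 2) := by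
    intro R hR x
    obtain ⟨hsm, hbd, h1, h0, hgr⟩ := hφ R hR
    have := hgr x
    have hnn : (0:ℝ) ≤ h x ^ 2 * ‖gradient (φ R) x‖ ^ 2 := by positivity
    rw [Real.norm_eq_abs, abs_of_nonneg hnn]
    nlinarith [sq_nonneg (h x)]
  -- A tends to 0
  have hAtend : Tendsto
      (fun R : ℝ => ∫ x, φ R x * h x * ⟪gradient (φ R) x, gradient h x⟫ ∂μ)
      atTop (nhds 0) := by
    have hb0 : Tendsto (fun R : ℝ => Real.sqrt C * (K / 2) * R⁻¹) atTop (nhds 0) := by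
      simpa using tendsto_inv_atTop_zero.const_mul (Real.sqrt C * (K / 2))
    refine squeeze_zero_norm' ?_ hb0
    filter_upwards [eventually_gt_atTop (0:ℝ)] with R hR
    have hb : ‖∫ x, φ R x * h x * ⟪gradient (φ R) x, gradient h x⟫ ∂μ‖
          ≤ ∫ x, Real.sqrt C / R * ((h x ^ 2 + ‖gradient h x‖ ^ 2) / 2) ∂μ :=
          norm_integral_le_of_norm_le ((hgInt.div_const 2).const_mul _)
          (ae_of_all _ (key R hR))
    calc ‖∫ x, φ R x * h x * ⟪gradient (φ R) x, gradient h x⟫ ∂μ‖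
          ≤ ∫ x, Real.sqrt C / R * ((h x ^ 2 + ‖gradient h x‖ ^ 2) / 2) ∂μ := hb
        _ = Real.sqrt C / R * (K / 2) := by
            rw [integral_const_mul]
            congr 1
            rw [← integral_div]
        _ = Real.sqrt C * (K / 2) * R⁻¹ := by rw [div_eq_mul_inv]; ring
  -- B tends to 0
  have hBtend : Tendsto
      (fun R : ℝ => ∫ x, h x ^ 2 * ‖gradient (φ R) x‖ ^ 2 ∂μ)
      atTop (nhds 0) := by
    have hb0 : Tendsto (fun R : ℝ => C * L * (R ^ 2)⁻¹) atTop (nhds 0) := by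
      have h2 : Tendsto (fun R : ℝ => (R ^ 2)⁻¹) atTop (nhds 0) :=
        (tendsto_pow_atTop two_ne_zero).inv_tendsto_atTop
      simpa using h2.const_mul (C * L)
    refine squeeze_zero_norm' ?_ hb0
    filter_upwards [eventually_gt_atTop (0:ℝ)] with R hR
    have hb : ‖∫ x, h x ^ 2 * ‖gradient (φ R) x‖ ^ 2 ∂μ‖
          ≤ ∫ x, C / R ^ 2 * (h x ^ 2) ∂μ :=
        norm_integral_le_of_norm_le (hL2.const_mul _) (ae_of_all _ (keyB R hR))
    calc ‖∫ x, h x ^ 2 * ‖gradient (φ R) x‖ ^ 2 ∂μ‖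
          ≤ ∫ x, C / R ^ 2 * (h x ^ 2) ∂μ := hb
        _ = C / R ^ 2 * L := by rw [integral_const_mul]
        _ = C * L * (R ^ 2)⁻¹ := by rw [div_eq_mul_inv]; ring
  -- D tends to ∫‖∇h‖²
  have hDtend : Tendsto
      (fun R : ℝ => ∫ x, (φ R x) ^ 2 * ‖gradient h x‖ ^ 2 ∂μ)
      atTop (nhds (∫ x, ‖gradient h x‖ ^ 2 ∂μ)) := by
    apply tendsto_integral_filter_of_dominated_convergence
      (fun x => ‖gradient h x‖ ^ 2)
    · filter_upwards [eventually_gt_atTop (0:ℝ)] with R hR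
      exact (((hφ R hR).1.continuous.pow 2).mul (hgc.norm.pow 2)).aestronglyMeasurable
    · filter_upwards [eventually_gt_atTop (0:ℝ)] with R hR
      refine ae_of_all _ fun x => ?_
      obtain ⟨hsm, hbd, h1, h0, hgr⟩ := hφ R hR
      have hnn : (0:ℝ) ≤ (φ R x) ^ 2 * ‖gradient h x‖ ^ 2 := by positivity
      rw [Real.norm_eq_abs, abs_of_nonneg hnn]
      have h2 : φ R x ^ 2 ≤ 1 := by nlinarith [(hbd x).1, (hbd x).2]
      calc φ R x ^ 2 * ‖gradient h x‖ ^ 2 ≤ 1 * ‖gradient h x‖ ^ 2 :=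
            mul_le_mul_of_nonneg_right h2 (by positivity)
        _ = ‖gradient h x‖ ^ 2 := one_mul _
    · exact hD
    · refine ae_of_all _ fun x => ?_
      have hev : ∀ᶠ R : ℝ in atTop,
          (φ R x) ^ 2 * ‖gradient h x‖ ^ 2 = ‖gradient h x‖ ^ 2 := by
        filter_upwards [eventually_gt_atTop (max ‖x‖ 0)] with R hR
        have hR0 : 0 < R := lt_of_le_of_lt (le_max_right _ _) hR
        have hx : x ∈ Metric.ball (0 : EuclideanSpace ℝ (Fin n)) R := by
          rw [Metric.mem_ball, dist_zero_right]
          exact lt_of_le_of_lt (le_max_left _ _) hR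
        rw [(hφ R hR0).2.2.1 x hx]; ring
      exact tendsto_const_nhds.congr' (hev.mono fun R hR => hR.symm)
  refine ⟨hAtend, ?_⟩
  -- expand the integrand and combine
  have heq : ∀ᶠ R : ℝ in atTop,
      ∫ x, ‖gradient (fun y => φ R y * h y) x‖ ^ 2 ∂μ
        = ∫ x, (φ R x) ^ 2 * ‖gradient h x‖ ^ 2 ∂μ
          + (2 * ∫ x, φ R x * h x * ⟪gradient (φ R) x, gradient h x⟫ ∂μ
             + ∫ x, h x ^ 2 * ‖gradient (φ R) x‖ ^ 2 ∂μ) := by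
    filter_upwards [eventually_gt_atTop (0:ℝ)] with R hR
    obtain ⟨hsm, hbd, h1, h0, hgr⟩ := hφ R hR
    have hgφc : Continuous (gradient (φ R)) := continuous_gradient' hsm
    have hpt : ∀ x, ‖gradient (fun y => φ R y * h y) x‖ ^ 2
        = (φ R x) ^ 2 * ‖gradient h x‖ ^ 2
          + (2 * (φ R x * h x * ⟪gradient (φ R) x, gradient h x⟫)
             + h x ^ 2 * ‖gradient (φ R) x‖ ^ 2) := by
      intro x
      rw [gradient_mul' ((hsm.differentiable (by simp)).differentiableAt)
        ((hh.differentiable (by simp)).differentiableAt)]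
      rw [norm_add_sq_real]
      simp only [norm_smul, Real.norm_eq_abs, mul_pow, sq_abs,
        real_inner_smul_left, real_inner_smul_right]
      rw [real_inner_comm (gradient h x) (gradient (φ R) x)]
      ring
    have intD : Integrable (fun x => (φ R x) ^ 2 * ‖gradient h x‖ ^ 2) μ := by
      refine hD.mono' ((((hsm.continuous.pow 2).mul (hgc.norm.pow 2))).aestronglyMeasurable)
        (ae_of_all _ fun x => ?_)
      have hnn : (0:ℝ) ≤ (φ R x) ^ 2 * ‖gradient h x‖ ^ 2 := by positivity
      rw [Real.norm_eq_abs, abs_of_nonneg hnn]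
      have h2 : φ R x ^ 2 ≤ 1 := by nlinarith [(hbd x).1, (hbd x).2]
      calc φ R x ^ 2 * ‖gradient h x‖ ^ 2 ≤ 1 * ‖gradient h x‖ ^ 2 :=
            mul_le_mul_of_nonneg_right h2 (by positivity)
        _ = ‖gradient h x‖ ^ 2 := one_mul _
    have intA : Integrable (fun x => φ R x * h x * ⟪gradient (φ R) x, gradient h x⟫) μ := by
      refine (((hgInt.div_const 2).const_mul (Real.sqrt C / R)).mono'
        (((hsm.continuous.mul hhc).mul (hgφc.inner hgc)).aestronglyMeasurable)
        (ae_of_all _ fun x => ?_))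
      exact key R hR x
    have intB : Integrable (fun x => h x ^ 2 * ‖gradient (φ R) x‖ ^ 2) μ := by
      refine ((hL2.const_mul (C / R ^ 2)).mono'
        (((hhc.pow 2).mul (hgφc.norm.pow 2)).aestronglyMeasurable)
        (ae_of_all _ fun x => ?_))
      exact keyB R hR x
    have intA2 : Integrable
        (fun x => 2 * (φ R x * h x * ⟪gradient (φ R) x, gradient h x⟫)) μ := by
      exact intA.const_mul 2
    have intAB : Integrable
        (fun x => 2 * (φ R x * h x * ⟪gradient (φ R) x, gradient h x⟫)
          + h x ^ 2 * ‖gradient (φ R) x‖ ^ 2) μ := by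
      exact intA2.add intB
    rw [integral_congr_ae (ae_of_all _ hpt), integral_add intD intAB,
      integral_add intA2 intB, integral_const_mul]
  have : Tendsto
      (fun R : ℝ => ∫ x, (φ R x) ^ 2 * ‖gradient h x‖ ^ 2 ∂μ
        + (2 * ∫ x, φ R x * h x * ⟪gradient (φ R) x, gradient h x⟫ ∂μ
           + ∫ x, h x ^ 2 * ‖gradient (φ R) x‖ ^ 2 ∂μ))
      atTop (nhds (∫ x, ‖gradient h x‖ ^ 2 ∂μ)) := by
    have := hDtend.add ((hAtend.const_mul 2).add hBtend)
    simpa using this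
  exact this.congr' (heq.mono fun R hR => hR.symm)


end
end
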